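/- arXiv:2605.18116 — 7 statements merged into one kernel-verified Lean document; each statement's English description precedes it below -/
import Mathlib

section
/- Let K be a field of characteristic zero, let G be a Lie algebra over K, and let a be a Lie ideal of G whose center is zero and such that every K-linear derivation of a is inner (i.e. of the form ad(x) for some x ∈ a). Then G is the internal direct sum of the centralizer C_G(a) = {x ∈ G | [x,a] = 0} and a, and G is isomorphic as a Lie algebra to the product (G/a) × a. -/
section ProdLie

variable (K L₁ L₂ : Type*) [Field K] [LieRing L₁] [LieRing L₂]
  [LieAlgebra K L₁] [LieAlgebra K L₂]

/-- The componentwise bracket on a product. -/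
instance Prod.instBracketProd : Bracket (L₁ × L₂) (L₁ × L₂) :=
  ⟨fun x y => (⁅x.1, y.1⁆, ⁅x.2, y.2⁆)⟩

/-- The product of two Lie rings, with componentwise bracket. -/
instance Prod.instLieRing : LieRing (L₁ × L₂) :=
  { (inferInstance : AddCommGroup (L₁ × L₂)),
    (inferInstance : Bracket (L₁ × L₂) (L₁ × L₂)) with
    add_lie := fun x y z =>
      Prod.ext (add_lie x.1 y.1 z.1) (add_lie x.2 y.2 z.2)
    lie_add := fun x y z =>
      Prod.ext (lie_add x.1 y.1 z.1) (lie_add x.2 y.2 z.2)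
    lie_self := fun x => Prod.ext (lie_self x.1) (lie_self x.2)
    leibniz_lie := fun x y z =>
      Prod.ext (leibniz_lie x.1 y.1 z.1) (leibniz_lie x.2 y.2 z.2) }

/-- The product of two Lie algebras, with componentwise bracket. -/
instance Prod.instLieAlgebraProd : LieAlgebra K (L₁ × L₂) :=
  { (inferInstance : Module K (L₁ × L₂)) with
    lie_smul := fun t x y => Prod.ext (lie_smul t x.1 y.1) (lie_smul t x.2 y.2) }

end ProdLie

/-!
Since `a` is centerless and all its derivations are inner, `ad : a → Der a` is an isomorphism of
Lie algebras. Bracketing with `x ∈ G` preserves the ideal `a`, giving a Lie homomorphism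
`G → Der a`; composed with `ad⁻¹` it becomes a Lie homomorphism `p : G → a` that fixes `a`
pointwise and satisfies `⁅p x, z⁆ = ⁅x, z⁆` for `z ∈ a`. So `x - p x` centralizes `a`, and
`x ↦ (x mod a, p x)` is an isomorphism `G ≃ (G ⧸ a) × a`.
-/

namespace LieIdeal

variable {R L : Type*} [CommRing R] [LieRing L] [LieAlgebra R L] (I : LieIdeal R L)

def quotientMk : L →ₗ⁅R⁆ L ⧸ I :=
  { (LieSubmodule.Quotient.mk' I : L →ₗ[R] L ⧸ I) with map_lie' := rfl }

@[simp] lemma quotientMk_apply (x : L) : I.quotientMk x = LieSubmodule.Quotient.mk x := rfl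

noncomputable def equivQuotientProdOfRetraction (φ : L →ₗ⁅R⁆ I) (hφ : ∀ z : I, φ z = z) :
    L ≃ₗ⁅R⁆ (L ⧸ I) × I :=
  LieEquiv.ofBijective (I.quotientMk.prod φ) <| by
    refine ⟨(injective_iff_map_eq_zero _).mpr fun x hx => ?_, fun ⟨q, y⟩ => ?_⟩
    · obtain ⟨hxq, hxφ⟩ := Prod.mk_eq_zero.mp hx
      have hxI : x ∈ I := LieSubmodule.Quotient.mk_eq_zero'.mp hxq
      simpa using congrArg Subtype.val ((hφ ⟨x, hxI⟩).symm.trans hxφ)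
    · obtain ⟨x, rfl⟩ := LieSubmodule.Quotient.surjective_mk' I q
      refine ⟨x - φ x + y, Prod.ext ?_ ?_⟩
      · change I.quotientMk (x - φ x + y) = I.quotientMk x
        rw [← sub_eq_zero, ← map_sub, quotientMk_apply, LieSubmodule.Quotient.mk_eq_zero',
          show x - φ x + y - x = (y : L) - φ x by abel]
        exact I.sub_mem y.2 (φ x).2
      · simp [hφ]

def adDerivation : L →ₗ⁅R⁆ LieDerivation R I I where
  toFun x :=
    { toLinearMap := LieModule.toEnd R L I x
      leibniz' := fun y z => by
        ext
        show ⁅x, ⁅(y : L), (z : L)⁆⁆ = ⁅(y : L), ⁅x, (z : L)⁆⁆ - ⁅(z : L), ⁅x, (y : L)⁆⁆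
        rw [leibniz_lie, ← lie_skew (z : L)]
        abel }
  map_add' x y := by ext; simp
  map_smul' t x := by ext; simp
  map_lie' := by intro x y; ext; simp

@[simp] lemma coe_adDerivation_apply (x : L) (z : I) :
    (I.adDerivation x z : L) = ⁅x, (z : L)⁆ := rfl

lemma adDerivation_coe_eq_ad (z : I) : I.adDerivation z = LieDerivation.ad R I z := by
  ext; simp

variable {I} (had : Function.Bijective (LieDerivation.ad R I))

noncomputable def retractionOfBijectiveAd : L →ₗ⁅R⁆ I :=
  (LieEquiv.ofBijective _ had).symm.toLieHom.comp I.adDerivation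

lemma ad_retractionOfBijectiveAd (x : L) :
    LieDerivation.ad R I (retractionOfBijectiveAd had x) = I.adDerivation x :=
  (LieEquiv.ofBijective _ had).apply_symm_apply _

lemma lie_retractionOfBijectiveAd (x : L) (z : I) :
    ⁅(retractionOfBijectiveAd had x : L), (z : L)⁆ = ⁅x, (z : L)⁆ := by
  simpa using congrArg (fun D => (D z : L)) (ad_retractionOfBijectiveAd had x)

lemma retractionOfBijectiveAd_coe (z : I) : retractionOfBijectiveAd had z = z :=
  had.injective <| by rw [ad_retractionOfBijectiveAd, adDerivation_coe_eq_ad]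

end LieIdeal

theorem lieIdeal_complemented_of_centerless_of_derivations_inner_general
    (K G : Type*) [Field K] [LieRing G] [LieAlgebra K G]
    (a : LieIdeal K G)
    (hcenter : LieAlgebra.center K a = ⊥)
    (hinner : ∀ D : LieDerivation K a a, ∃ x : a, D = LieDerivation.ad K a x) :
    (∀ x : G, ∃ c y : G, (∀ z ∈ a, ⁅c, z⁆ = 0) ∧ y ∈ a ∧ x = c + y) ∧
    (∀ x : G, (∀ z ∈ a, ⁅x, z⁆ = 0) → x ∈ a → x = 0) ∧
    Nonempty (G ≃ₗ⁅K⁆ (G ⧸ a) × a) := by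
  have had : Function.Bijective (LieDerivation.ad K a) :=
    ⟨LieDerivation.injective_ad_of_center_eq_bot hcenter,
      fun D => (hinner D).imp fun _ h => h.symm⟩
  set p := LieIdeal.retractionOfBijectiveAd had
  refine ⟨fun x => ⟨x - p x, p x, fun z hz => ?_, (p x).2, (sub_add_cancel x _).symm⟩,
    fun x hx hxa => ?_,
    ⟨a.equivQuotientProdOfRetraction p (LieIdeal.retractionOfBijectiveAd_coe had)⟩⟩
  · rw [sub_lie, LieIdeal.lie_retractionOfBijectiveAd had x ⟨z, hz⟩, sub_self]
  · have : (⟨x, hxa⟩ : a) = 0 := had.injective <| by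
      ext z
      simpa using hx z z.2
    simpa using congrArg Subtype.val this

/-- If `a` is a Lie ideal of `G` whose center is zero and all of whose
derivations are inner, then `G` is the internal direct sum of the centralizer of `a` and `a`,
and `G ≅ (G ⧸ a) × a` as Lie algebras. -/
theorem lieIdeal_complemented_of_centerless_of_derivations_inner
    (K G : Type*) [Field K] [CharZero K] [LieRing G] [LieAlgebra K G]
    (a : LieIdeal K G)
    (hcenter : LieAlgebra.center K a = ⊥)
    (hinner : ∀ D : LieDerivation K a a, ∃ x : a, D = LieDerivation.ad K a x) :
    (∀ x : G, ∃ c y : G, (∀ z ∈ a, ⁅c, z⁆ = 0) ∧ y ∈ a ∧ x = c + y) ∧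
    (∀ x : G, (∀ z ∈ a, ⁅x, z⁆ = 0) → x ∈ a → x = 0) ∧
    Nonempty (G ≃ₗ⁅K⁆ (G ⧸ a) × a) :=
  lieIdeal_complemented_of_centerless_of_derivations_inner_general K G a hcenter hinner
end

section
/- Let K be a field of characteristic zero and let G be a weakly Noetherian Lie algebra over K. Then there is no injective Lie algebra homomorphism from the free Lie algebra over K on two generators into G; equivalently, G contains no nonabelian free Lie subalgebra. -/
/-!
Send the generators `x, y` of the free Lie algebra to `X² d/dX` and to multiplication by `X` on
`K[X]`. Since `[X² d/dX, p] = X² p'` for a multiplication operator `p`, the element `ad_x^n y`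
maps to multiplication by `n! X^(n+1)`. The preimage `m` of the abelian subalgebra of
multiplication operators therefore maps `[m, m]` to zero while containing the `ad_x^n y`, whose
images are linearly independent in characteristic zero; so `m/[m, m]` is infinite dimensional.
Since a subalgebra of a weakly Noetherian Lie algebra is again weakly Noetherian, the free Lie
algebra cannot embed.
-/

/-- A Lie algebra is weakly Noetherian if `m/[m,m]` is finite dimensional over `K` for every
Lie subalgebra `m`. -/
def WeaklyNoetherian (K G : Type*) [Field K] [LieRing G] [LieAlgebra K G] : Prop :=
  ∀ m : LieSubalgebra K G,
    FiniteDimensional K (↥m ⧸ LieAlgebra.derivedSeries K ↥m 1)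

open LieAlgebra Polynomial

section Abelianization

variable {K L : Type*} [Field K] [LieRing L] [LieAlgebra K L]

lemma derivedSeries_one_le_ker {M : Type*} [AddCommGroup M] [Module K M] {ψ : L →ₗ[K] M}
    (hψ : ∀ a b : L, ψ ⁅a, b⁆ = 0) : (derivedSeries K L 1).toSubmodule ≤ LinearMap.ker ψ := by
  rw [← LieIdeal.toLieSubalgebra_toSubmodule, coe_derivedSeries_one_eq, Submodule.span_le]
  rintro _ ⟨a, b, rfl⟩
  exact hψ a b

lemma not_finiteDimensional_abelianization {ι M : Type*} [Infinite ι] [AddCommGroup M]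
    [Module K M] (ψ : L →ₗ[K] M) (hψ : ∀ a b : L, ψ ⁅a, b⁆ = 0) {u : ι → L}
    (hu : LinearIndependent K (ψ ∘ u)) :
    ¬ FiniteDimensional K (L ⧸ derivedSeries K L 1) := by
  intro _
  let ψbar := (derivedSeries K L 1).toSubmodule.liftQ ψ (derivedSeries_one_le_ker hψ)
  have hu' : LinearIndependent K (ψbar ∘ (Submodule.Quotient.mk ∘ u)) := hu
  exact Module.Finite.not_linearIndependent_of_infinite _ hu'.of_comp

lemma LieHom.finiteDimensional_abelianization {L' : Type*} [LieRing L'] [LieAlgebra K L']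
    (f : L →ₗ⁅K⁆ L') (hf : Function.Surjective f)
    [FiniteDimensional K (L ⧸ derivedSeries K L 1)] :
    FiniteDimensional K (L' ⧸ derivedSeries K L' 1) := by
  have hle : (derivedSeries K L 1).toSubmodule ≤
      (derivedSeries K L' 1).toSubmodule.comap f.toLinearMap :=
    fun x hx => LieIdeal.derivedSeries_map_le 1 (LieIdeal.mem_map hx)
  refine Module.Finite.of_surjective (Submodule.mapQ _ _ f.toLinearMap hle) ?_
  rintro ⟨y⟩
  obtain ⟨x, rfl⟩ := hf y
  exact ⟨Submodule.Quotient.mk x, rfl⟩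

lemma WeaklyNoetherian.of_injective {G : Type*} [LieRing G] [LieAlgebra K G]
    (hG : WeaklyNoetherian K G) (f : L →ₗ⁅K⁆ G) (hf : Function.Injective f) :
    WeaklyNoetherian K L := fun m =>
  have := hG (m.map f)
  let e := m.equivMapOfInjective f hf
  e.symm.toLieHom.finiteDimensional_abelianization e.symm.surjective

end Abelianization

lemma linearIndependent_factorial_smul_X_pow (K : Type*) [Field K] [CharZero K] :
    LinearIndependent K (fun n : ℕ => (n.factorial : K) • (X : K[X]) ^ (n + 1)) := by
  have hX : LinearIndependent K (fun n : ℕ => (X : K[X]) ^ (n + 1)) := by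
    simpa [Function.comp_def, monomial_one_right_eq_X_pow] using
      (basisMonomials K).linearIndependent.comp Nat.succ Nat.succ_injective
  exact hX.units_smul fun n => Units.mk0 _ (Nat.cast_ne_zero.2 n.factorial_ne_zero)

section FreeLieAlgebraToEnd

attribute [local instance 100] LieRing.ofAssociativeRing

lemma lie_lmul_mul_derivative_lmul {R : Type*} [CommRing R] (p q : R[X]) :
    ⁅Algebra.lmul R R[X] q * derivative, Algebra.lmul R R[X] p⁆ =
      Algebra.lmul R R[X] (q * derivative p) := by
  refine LinearMap.ext fun r => ?_
  simp only [Algebra.coe_lmul_eq_mul, Ring.lie_def, LinearMap.sub_apply, Module.End.mul_apply,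
    LinearMap.mul_apply_apply, derivative_mul]
  ring

variable (K : Type*) [Field K]

noncomputable def freeLieAlgebraToEnd : FreeLieAlgebra K (Fin 2) →ₗ⁅K⁆ Module.End K K[X] :=
  FreeLieAlgebra.lift K ![Algebra.lmul K K[X] (X ^ 2) * derivative, Algebra.lmul K K[X] X]

noncomputable def lmulPreimage : LieSubalgebra K (FreeLieAlgebra K (Fin 2)) :=
  (Algebra.lmul K K[X] : K[X] →ₗ⁅K⁆ Module.End K K[X]).range.comap (freeLieAlgebraToEnd K)

lemma mem_lmulPreimage {a : FreeLieAlgebra K (Fin 2)} :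
    a ∈ lmulPreimage K ↔ ∃ p, Algebra.lmul K K[X] p = freeLieAlgebraToEnd K a :=
  Iff.rfl

lemma freeLieAlgebraToEnd_ad_pow (n : ℕ) :
    freeLieAlgebraToEnd K ((ad K _ (FreeLieAlgebra.of K 0) ^ n) (FreeLieAlgebra.of K 1)) =
      Algebra.lmul K K[X] ((n.factorial : K) • X ^ (n + 1)) := by
  induction n with
  | zero => simp [freeLieAlgebraToEnd]
  | succ n ih =>
    rw [pow_succ', Module.End.mul_apply, ad_apply, LieHom.map_lie, ih]
    simp only [freeLieAlgebraToEnd, FreeLieAlgebra.lift_of_apply, Matrix.cons_val_zero]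
    rw [lie_lmul_mul_derivative_lmul]
    congr 1
    rw [derivative_smul, derivative_X_pow, Nat.factorial_succ]
    push_cast
    simp only [smul_eq_C_mul, map_mul, map_add, map_natCast, map_one]
    ring

lemma ad_pow_mem_lmulPreimage (n : ℕ) :
    (ad K _ (FreeLieAlgebra.of K 0) ^ n) (FreeLieAlgebra.of K 1) ∈ lmulPreimage K :=
  (mem_lmulPreimage K).2 ⟨_, (freeLieAlgebraToEnd_ad_pow K n).symm⟩

lemma freeLieAlgebraToEnd_lie_eq_zero {a b : FreeLieAlgebra K (Fin 2)}
    (ha : a ∈ lmulPreimage K) (hb : b ∈ lmulPreimage K) :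
    freeLieAlgebraToEnd K ⁅a, b⁆ = 0 := by
  obtain ⟨p, hp⟩ := (mem_lmulPreimage K).1 ha
  obtain ⟨q, hq⟩ := (mem_lmulPreimage K).1 hb
  rw [LieHom.map_lie, ← hp, ← hq, Ring.lie_def, ← map_mul, ← map_mul, mul_comm, sub_self]

theorem not_weaklyNoetherian_freeLieAlgebra [CharZero K] :
    ¬ WeaklyNoetherian K (FreeLieAlgebra K (Fin 2)) := by
  intro h
  let m := lmulPreimage K
  let ψ : m →ₗ[K] Module.End K K[X] :=
    (freeLieAlgebraToEnd K).toLinearMap ∘ₗ m.toSubmodule.subtype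
  let u : ℕ → m := fun n => ⟨_, ad_pow_mem_lmulPreimage K n⟩
  have hψu : ψ ∘ u = (Algebra.lmul K K[X]).toLinearMap ∘
      fun n : ℕ => (n.factorial : K) • (X : K[X]) ^ (n + 1) :=
    funext (freeLieAlgebraToEnd_ad_pow K)
  refine not_finiteDimensional_abelianization ψ
    (fun a b => freeLieAlgebraToEnd_lie_eq_zero K a.2 b.2) (u := u) ?_ (h m)
  rw [hψu]
  exact (linearIndependent_factorial_smul_X_pow K).map'
    _ (LinearMap.ker_eq_bot.2 Algebra.lmul_injective)

end FreeLieAlgebraToEnd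

/-- A weakly Noetherian Lie algebra over a field of characteristic zero
contains no nonabelian free Lie subalgebra: there is no injective Lie algebra homomorphism
from the free Lie algebra on two generators into `G`. -/
theorem weaklyNoetherian_no_free_subalgebra
    (K G : Type*) [Field K] [CharZero K] [LieRing G] [LieAlgebra K G]
    (hG : WeaklyNoetherian K G) :
    ¬ ∃ f : FreeLieAlgebra K (Fin 2) →ₗ⁅K⁆ G, Function.Injective f := by
  rintro ⟨f, hf⟩
  exact not_weaklyNoetherian_freeLieAlgebra K (hG.of_injective f hf)
end

section
/- Let K be a field of characteristic zero, let G' be a Lie algebra over K, and let G ⊆ G' be a Lie subalgebra of finite codimension (i.e. the quotient vector space G'/G is finite-dimensional over K). If G is weakly Noetherian, then G' is weakly Noetherian. -/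
/-!
Let `m` be a subalgebra of `G'`. Then `m ∩ G` has finite codimension in `m`, since `m ⧸ (m ∩ G)`
embeds into `G' ⧸ G`, and `[m ∩ G, m ∩ G] ⊆ [m, m]`. Hence `m ⧸ [m, m]` is a quotient of
`m ⧸ [m ∩ G, m ∩ G]`, which is an extension of `m ⧸ (m ∩ G)` by `(m ∩ G) ⧸ [m ∩ G, m ∩ G]`;
both are finite-dimensional, the latter because `G` is weakly Noetherian.
-/

open LieAlgebra

section

variable {K : Type*} [Field K] {H L : Type*} [LieRing H] [LieAlgebra K H] [LieRing L]
  [LieAlgebra K L]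

theorem Submodule.finiteDimensional_quotient_comap {V W : Type*} [AddCommGroup V] [Module K V]
    [AddCommGroup W] [Module K W] (f : V →ₗ[K] W) (p : Submodule K W)
    [FiniteDimensional K (W ⧸ p)] : FiniteDimensional K (V ⧸ p.comap f) := by
  have hker : LinearMap.ker (p.mkQ ∘ₗ f) = p.comap f := by
    rw [LinearMap.ker_comp, Submodule.ker_mkQ]
  exact hker ▸ Module.Finite.equiv (p.mkQ ∘ₗ f).quotKerEquivRange.symm

theorem LieHom.map_derivedSeries_one_le (f : H →ₗ⁅K⁆ L) :
    (derivedSeries K H 1).toSubmodule.map (f : H →ₗ[K] L) ≤ (derivedSeries K L 1).toSubmodule :=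
  fun _ ⟨x, hx, hfx⟩ =>
    hfx ▸ (LieIdeal.map_le f _ _).mp (LieIdeal.derivedSeries_map_le (f := f) 1) ⟨x, hx, rfl⟩

theorem LieHom.finiteDimensional_quotient_derivedSeries_one (f : H →ₗ⁅K⁆ L)
    [FiniteDimensional K (H ⧸ derivedSeries K H 1)]
    [FiniteDimensional K (L ⧸ LinearMap.range (f : H →ₗ[K] L))] :
    FiniteDimensional K (L ⧸ derivedSeries K L 1) :=
  -- `L ⧸ f [H, H]` is finite-dimensional by the library instance for quotients by images.
  Submodule.CoFG.of_le f.map_derivedSeries_one_le inferInstance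

end

theorem weaklyNoetherian_of_finite_codim_subalgebra_general
    (K G' : Type*) [Field K] [LieRing G'] [LieAlgebra K G']
    (G : LieSubalgebra K G')
    (hcodim : FiniteDimensional K (G' ⧸ G.toSubmodule))
    (hG : WeaklyNoetherian K G) :
    WeaklyNoetherian K G' := by
  intro m
  let incl : m.comap G.incl →ₗ⁅K⁆ m :=
    { toFun := fun x => ⟨x.1.1, x.2⟩
      map_add' := fun _ _ => rfl
      map_smul' := fun _ _ => rfl
      map_lie' := rfl }
  have hrange : G.toSubmodule.comap m.toSubmodule.subtype ≤
      LinearMap.range (incl : m.comap G.incl →ₗ[K] m) :=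
    fun x hx => ⟨(⟨⟨x.1, hx⟩, x.2⟩ : m.comap G.incl), rfl⟩
  have hcodim_m : FiniteDimensional K (m ⧸ LinearMap.range (incl : m.comap G.incl →ₗ[K] m)) :=
    Submodule.CoFG.of_le hrange
      (G.toSubmodule.finiteDimensional_quotient_comap m.toSubmodule.subtype)
  have habel : FiniteDimensional K (_ ⧸ derivedSeries K (m.comap G.incl) 1) := hG _
  exact incl.finiteDimensional_quotient_derivedSeries_one

/-- If `G` is a Lie subalgebra of finite codimension of `G'` and `G` is
weakly Noetherian, then `G'` is weakly Noetherian. -/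
theorem weaklyNoetherian_of_finite_codim_subalgebra
    (K G' : Type*) [Field K] [CharZero K] [LieRing G'] [LieAlgebra K G']
    (G : LieSubalgebra K G')
    (hcodim : FiniteDimensional K (G' ⧸ G.toSubmodule))
    (hG : WeaklyNoetherian K G) :
    WeaklyNoetherian K G' :=
  weaklyNoetherian_of_finite_codim_subalgebra_general K G' G hcodim hG
end

section
/- Let K be a field of characteristic zero and let G be a weakly Noetherian Lie algebra over K. Then for every k ≥ 1 the k-th term D^k G of the derived series of G has finite codimension in G (the quotient vector space G/D^k G is finite-dimensional over K). In particular, if G is solvable, then G is finite-dimensional over K. -/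
theorem Submodule.finite_quotient_of_le {R M : Type*} [Ring R] [AddCommGroup M] [Module R M]
    {A B : Submodule R M} (hAB : A ≤ B) [Module.Finite R (B ⧸ A.comap B.subtype)]
    [Module.Finite R (M ⧸ B)] : Module.Finite R (M ⧸ A) := by
  have hrange : LinearMap.range ((A.comap B.subtype).mapQ A B.subtype le_rfl) = B.map A.mkQ := by
    rw [range_mapQ, range_subtype]
  have : Module.Finite R (B.map A.mkQ) := hrange ▸ inferInstance
  have : Module.Finite R ((M ⧸ A) ⧸ B.map A.mkQ) :=
    .equiv (quotientQuotientEquivQuotient A B hAB).symm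
  exact .of_submodule_quotient (B.map A.mkQ)

theorem LieIdeal.derivedSeries_one_toSubmodule {R L : Type*} [CommRing R] [LieRing L]
    [LieAlgebra R L] (I : LieIdeal R L) :
    (LieAlgebra.derivedSeries R I 1).toSubmodule =
      (⁅I, I⁆ : LieIdeal R L).toSubmodule.comap I.toSubmodule.subtype := by
  rw [LieIdeal.derivedSeries_eq_derivedSeriesOfIdeal_comap]
  rfl

namespace WeaklyNoetherian

variable {K G : Type*} [Field K] [LieRing G] [LieAlgebra K G]

theorem finiteDimensional_quotient_lie_self (hG : WeaklyNoetherian K G) (I : LieIdeal K G)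
    [FiniteDimensional K (G ⧸ I)] : FiniteDimensional K (G ⧸ ⁅I, I⁆) := by
  have : FiniteDimensional K
      (I.toSubmodule ⧸ (⁅I, I⁆ : LieIdeal K G).toSubmodule.comap I.toSubmodule.subtype) :=
    have : FiniteDimensional K (I ⧸ LieAlgebra.derivedSeries K I 1) := hG I
    .equiv (Submodule.quotEquivOfEq _ _ I.derivedSeries_one_toSubmodule)
  exact Submodule.finite_quotient_of_le (LieSubmodule.lie_le_left I I)

theorem finiteDimensional_quotient_derivedSeries (hG : WeaklyNoetherian K G) (k : ℕ) :
    FiniteDimensional K (G ⧸ LieAlgebra.derivedSeries K G k) := by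
  induction k with
  | zero =>
    rw [LieAlgebra.derivedSeries_def, LieAlgebra.derivedSeriesOfIdeal_zero]
    exact (inferInstance : FiniteDimensional K (G ⧸ (⊤ : Submodule K G)))
  | succ k ih =>
    rw [LieAlgebra.derivedSeries_def, LieAlgebra.derivedSeriesOfIdeal_succ]
    exact hG.finiteDimensional_quotient_lie_self _

theorem finiteDimensional_of_isSolvable (hG : WeaklyNoetherian K G) [LieAlgebra.IsSolvable G] :
    FiniteDimensional K G := by
  obtain ⟨k, hk⟩ := (LieAlgebra.isSolvable_iff K G).mp ‹_›
  have := hG.finiteDimensional_quotient_derivedSeries k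
  rw [hk] at this
  exact .equiv (Submodule.quotEquivOfEqBot (⊥ : Submodule K G) rfl)

end WeaklyNoetherian

theorem weaklyNoetherian_derivedSeries_finite_codim_general
    (K G : Type*) [Field K] [LieRing G] [LieAlgebra K G]
    (hG : WeaklyNoetherian K G) :
    (∀ k : ℕ, 1 ≤ k → FiniteDimensional K (G ⧸ LieAlgebra.derivedSeries K G k)) ∧
    (LieAlgebra.IsSolvable G → FiniteDimensional K G) :=
  ⟨fun k _ => hG.finiteDimensional_quotient_derivedSeries k,
    fun _ => hG.finiteDimensional_of_isSolvable⟩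

/-- In a weakly Noetherian Lie algebra, every term `D^k G` (`k ≥ 1`) of the
derived series has finite codimension; in particular a solvable weakly Noetherian Lie algebra
is finite dimensional. -/
theorem weaklyNoetherian_derivedSeries_finite_codim
    (K G : Type*) [Field K] [CharZero K] [LieRing G] [LieAlgebra K G]
    (hG : WeaklyNoetherian K G) :
    (∀ k : ℕ, 1 ≤ k → FiniteDimensional K (G ⧸ LieAlgebra.derivedSeries K G k)) ∧
    (LieAlgebra.IsSolvable G → FiniteDimensional K G) :=
  weaklyNoetherian_derivedSeries_finite_codim_general K G hG
end

section
/- Let K be a field of characteristic zero and let G be a weakly Noetherian Lie algebra over K. Then every ascending chain m₁ ⊆ m₂ ⊆ m₃ ⊆ ⋯ of finite-dimensional Lie ideals of G stabilizes: there is an index N with m_k = m_N for all k ≥ N. -/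
open Module Submodule Set

namespace Submodule

theorem exists_le_of_fg_le_iSup {R M : Type*} [Semiring R] [AddCommMonoid M] [Module R M]
    {ι : Type*} [Nonempty ι] {p : ι → Submodule R M} (hp : Directed (· ≤ ·) p)
    {S : Submodule R M} (hS : S.FG) (hle : S ≤ ⨆ i, p i) : ∃ i, S ≤ p i := by
  obtain ⟨_, ⟨i, rfl⟩, hi⟩ :=
    (CompleteLattice.isCompactElement_iff_le_of_directed_sSup_le (α := Submodule R M) S).mp
      ((fg_iff_compact S).mp hS) (range p) (range_nonempty p) hp.directedOn_range
      (sSup_range (f := p) ▸ hle)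
  exact ⟨i, hi⟩

theorem exists_mem_ker_notMem_of_not_fg {R M N : Type*} [Ring R] [IsNoetherianRing R]
    [AddCommGroup M] [Module R M] [AddCommGroup N] [Module R N] [IsNoetherian R N]
    (f : M →ₗ[R] N) {V W : Submodule R M} (hV : ¬ V.FG) (hW : W.FG) :
    ∃ x ∈ V, x ∈ LinearMap.ker f ∧ x ∉ W := by
  by_contra! h
  exact hV <| fg_of_fg_map_of_fg_inf_ker f (IsNoetherian.noetherian _)
    (hW.of_le fun x hx => h x hx.1 hx.2)

end Submodule

theorem LieAlgebra.derivedSeries_one_eq_bot {R L : Type*} [CommRing R] [LieRing L]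
    [LieAlgebra R L] [IsLieAbelian L] : derivedSeries R L 1 = ⊥ := by
  rw [derivedSeries_def, derivedSeriesOfIdeal_succ, derivedSeriesOfIdeal_zero,
    LieSubmodule.lie_eq_bot_iff]
  exact fun x _ y _ => trivial_lie_zero _ _ x y

namespace WeaklyNoetherian

variable {K G : Type*} [Field K] [LieRing G] [LieAlgebra K G]

theorem finiteDimensional_of_isLieAbelian (hG : WeaklyNoetherian K G) (A : LieSubalgebra K G)
    [IsLieAbelian A] : FiniteDimensional K A :=
  have := hG A
  .equiv (quotEquivOfEqBot (LieAlgebra.derivedSeries K A 1).toSubmodule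
    (by rw [LieAlgebra.derivedSeries_one_eq_bot]; rfl))

theorem fg_span_of_forall_lie_eq_zero (hG : WeaklyNoetherian K G) {s : Set G}
    (hs : ∀ a ∈ s, ∀ b ∈ s, ⁅a, b⁆ = 0) : (span K s).FG := by
  have : IsLieAbelian (LieSubalgebra.lieSpan K G s) :=
    LieSubalgebra.isLieAbelian_lieSpan_iff.mpr hs
  have := hG.finiteDimensional_of_isLieAbelian (LieSubalgebra.lieSpan K G s)
  exact Module.Finite.iff_fg.mp (finiteDimensional_of_le LieSubalgebra.submodule_span_le_lieSpan)

theorem fg_iSup_of_directed (hG : WeaklyNoetherian K G) {ι : Type*} [Nonempty ι]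
    (m : ι → LieIdeal K G) (hdir : Directed (· ≤ ·) m) (hfd : ∀ i, FiniteDimensional K (m i)) :
    (⨆ i, (m i : Submodule K G)).FG := by
  set I := ⨆ i, (m i : Submodule K G)
  by_contra hI
  obtain ⟨s, ⟨hsI, hs⟩, hmax⟩ :=
    zorn_subset {s : Set G | s ⊆ I ∧ ∀ a ∈ s, ∀ b ∈ s, ⁅a, b⁆ = 0} <| by
      intro c hcS hc
      refine ⟨⋃₀ c, ⟨sUnion_subset fun s hs => (hcS hs).1, ?_⟩, fun _ => subset_sUnion_of_mem⟩
      rintro a ⟨s, hs, has⟩ b ⟨t, ht, hbt⟩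
      rcases hc.total hs ht with hst | hts
      · exact (hcS ht).2 a (hst has) b hbt
      · exact (hcS hs).2 a has b (hts hbt)
  have hspan := hG.fg_span_of_forall_lie_eq_zero hs
  obtain ⟨j, hj⟩ := exists_le_of_fg_le_iSup
    (hdir.mono_comp _ fun _ _ h => (LieSubmodule.toSubmodule_le_toSubmodule _ _).mpr h)
    hspan (span_le.mpr hsI)
  obtain ⟨x, hxI, hx, hxs⟩ :=
    exists_mem_ker_notMem_of_not_fg (LieModule.toEnd K G (m j) : G →ₗ[K] End K (m j)) hI hspan
  have hx_comm : ∀ a ∈ s, ⁅x, a⁆ = 0 := fun a ha =>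
    congr_arg Subtype.val (LinearMap.congr_fun hx ⟨a, hj (subset_span ha)⟩)
  have hins : insert x s ∈ {s : Set G | s ⊆ I ∧ ∀ a ∈ s, ∀ b ∈ s, ⁅a, b⁆ = 0} := by
    refine ⟨insert_subset hxI hsI, ?_⟩
    rintro a (rfl | ha) b (rfl | hb)
    · exact lie_self _
    · exact hx_comm b hb
    · rw [← lie_skew, hx_comm a ha, neg_zero]
    · exact hs a ha b hb
  exact hxs (subset_span (hmax hins (subset_insert x s) (mem_insert x s)))

end WeaklyNoetherian

theorem weaklyNoetherian_chain_of_finiteDimensional_ideals_stabilizes_general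
    (K G : Type*) [Field K] [LieRing G] [LieAlgebra K G]
    (hG : WeaklyNoetherian K G)
    (m : ℕ → LieIdeal K G) (hmono : Monotone m)
    (hfd : ∀ k, FiniteDimensional K (m k)) :
    ∃ N, ∀ k, N ≤ k → m k = m N := by
  have hmono_toSubmodule : Monotone fun k => (m k : Submodule K G) :=
    fun _ _ h => (LieSubmodule.toSubmodule_le_toSubmodule _ _).mpr (hmono h)
  obtain ⟨N, hN⟩ := exists_le_of_fg_le_iSup hmono_toSubmodule.directed_le
    (hG.fg_iSup_of_directed m hmono.directed_le hfd) le_rfl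
  refine ⟨N, fun k hk => le_antisymm ?_ (hmono hk)⟩
  exact (LieSubmodule.toSubmodule_le_toSubmodule _ _).mp ((le_iSup _ k).trans hN)

/-- In a weakly Noetherian Lie algebra, every ascending chain of
finite-dimensional Lie ideals stabilizes. -/
theorem weaklyNoetherian_chain_of_finiteDimensional_ideals_stabilizes
    (K G : Type*) [Field K] [CharZero K] [LieRing G] [LieAlgebra K G]
    (hG : WeaklyNoetherian K G)
    (m : ℕ → LieIdeal K G) (hmono : Monotone m)
    (hfd : ∀ k, FiniteDimensional K (m k)) :
    ∃ N, ∀ k, N ≤ k → m k = m N :=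
  weaklyNoetherian_chain_of_finiteDimensional_ideals_stabilizes_general K G hG m hmono hfd
end

section
/- Let K be a field of characteristic zero and let S be a weakly Noetherian Lie algebra over K which is simple (S is nonabelian and has no Lie ideals other than 0 and S). Then the centroid Cent(S) is finite-dimensional over K, is commutative under composition (θ ∘ θ' = θ' ∘ θ for all θ, θ' ∈ Cent(S)), and every nonzero element of Cent(S) is a bijective endomorphism of S; hence Cent(S) is a finite field extension of K. -/
/-- The centroid of a Lie algebra: the space of `K`-linear endomorphisms `θ` with
`θ ⁅x, y⁆ = ⁅x, θ y⁆` for all `x, y`. -/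
def centroid (K G : Type*) [Field K] [LieRing G] [LieAlgebra K G] :
    Submodule K (G →ₗ[K] G) where
  carrier := {θ | ∀ x y : G, θ ⁅x, y⁆ = ⁅x, θ y⁆}
  add_mem' := fun {θ θ'} hθ hθ' x y => by
    simp only [LinearMap.add_apply, hθ x y, hθ' x y, lie_add]
  zero_mem' := fun x y => by simp
  smul_mem' := fun c θ hθ x y => by
    simp only [LinearMap.smul_apply, hθ x y, lie_smul]

/-!
An element of the centroid is exactly an endomorphism of the adjoint module, so by Schur's
argument a nonzero one has zero kernel and full image. The commutator of two centroid elements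
again lies in the centroid and kills every bracket, so it vanishes because `[S, S] ≠ 0`.
For finite dimensionality fix `x ≠ 0`: evaluation `θ ↦ θ x` is injective on the centroid, and
its image is an abelian subalgebra since `⁅θ x, θ' x⁆ = θ' (θ ⁅x, x⁆) = 0`; for an abelian
subalgebra `m` we have `m = m / [m, m]`, which is finite dimensional by weak Noetherianity.
-/

theorem WeaklyNoetherian.finiteDimensional_of_isLieAbelian_s13 {K G : Type*} [Field K] [LieRing G]
    [LieAlgebra K G] (hG : WeaklyNoetherian K G) (m : LieSubalgebra K G) [IsLieAbelian m] :
    FiniteDimensional K m := by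
  have hfin := hG m
  rw [show LieAlgebra.derivedSeries K m 1 = ⊥ by
    simp only [LieAlgebra.derivedSeriesOfIdeal_succ, LieAlgebra.derivedSeriesOfIdeal_zero,
      LieSubmodule.trivial_lie_oper_zero]] at hfin
  exact Module.Finite.equiv (Submodule.quotEquivOfEqBot _ rfl)

namespace centroid

variable {K G : Type*} [Field K] [LieRing G] [LieAlgebra K G] {θ θ' : G →ₗ[K] G}

theorem apply_lie_left (hθ : θ ∈ centroid K G) (x y : G) : θ ⁅x, y⁆ = ⁅θ x, y⁆ := by
  rw [← lie_skew, map_neg, hθ, ← lie_skew, neg_neg]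

theorem comp_mem (hθ : θ ∈ centroid K G) (hθ' : θ' ∈ centroid K G) :
    θ ∘ₗ θ' ∈ centroid K G := fun x y => by
  simp only [LinearMap.comp_apply]
  rw [hθ', hθ]

theorem apply_apply_lie_comm (hθ : θ ∈ centroid K G) (hθ' : θ' ∈ centroid K G) (x y : G) :
    θ (θ' ⁅x, y⁆) = θ' (θ ⁅x, y⁆) := by
  rw [hθ x y, apply_lie_left hθ' x (θ y), apply_lie_left hθ' x y, hθ]

theorem lie_apply_apply_self (hθ : θ ∈ centroid K G) (hθ' : θ' ∈ centroid K G) (x : G) :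
    ⁅θ x, θ' x⁆ = 0 := by
  rw [← hθ', ← apply_lie_left hθ, lie_self, map_zero, map_zero]

def toLieModuleHom (hθ : θ ∈ centroid K G) : G →ₗ⁅K, G⁆ G :=
  { θ with map_lie' := fun {x y} => hθ x y }

def evalₗ (x : G) : centroid K G →ₗ[K] G :=
  LinearMap.applyₗ x ∘ₗ (centroid K G).subtype

def orbit (x : G) : LieSubalgebra K G :=
  { LinearMap.range (evalₗ x) with
    lie_mem' := by
      rintro _ _ ⟨θ, rfl⟩ ⟨θ', rfl⟩
      change ⁅θ.1 x, θ'.1 x⁆ ∈ LinearMap.range (evalₗ x)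
      rw [lie_apply_apply_self θ.2 θ'.2]
      exact zero_mem _ }

instance (x : G) : IsLieAbelian (orbit (K := K) x) := by
  constructor
  rintro ⟨_, θ, rfl⟩ ⟨_, θ', rfl⟩
  exact Subtype.ext (lie_apply_apply_self θ.2 θ'.2 x)

section IsSimple

variable [LieAlgebra.IsSimple K G]

theorem injective_of_ne_zero (hθ : θ ∈ centroid K G) (hne : θ ≠ 0) : Function.Injective θ := by
  rcases LieAlgebra.IsSimple.eq_bot_or_eq_top (toLieModuleHom hθ).ker with h | h
  · exact (LieModuleHom.ker_eq_bot _).mp h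
  · refine absurd (LinearMap.ext fun x => ?_) hne
    exact LieModuleHom.mem_ker.mp (h ▸ LieSubmodule.mem_top x)

theorem surjective_of_ne_zero (hθ : θ ∈ centroid K G) (hne : θ ≠ 0) :
    Function.Surjective θ := by
  rcases LieAlgebra.IsSimple.eq_bot_or_eq_top (toLieModuleHom hθ).range with h | h
  · refine absurd (LinearMap.ext fun x => ?_) hne
    have hx : θ x ∈ (toLieModuleHom hθ).range := (LieModuleHom.mem_range _ _).mpr ⟨x, rfl⟩
    rwa [h, LieSubmodule.mem_bot] at hx
  · exact (LieModuleHom.range_eq_top _).mp h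

theorem bijective_of_ne_zero (hθ : θ ∈ centroid K G) (hne : θ ≠ 0) : Function.Bijective θ :=
  ⟨injective_of_ne_zero hθ hne, surjective_of_ne_zero hθ hne⟩

theorem eq_zero_of_apply_lie_eq_zero (hθ : θ ∈ centroid K G) (h : ∀ x y : G, θ ⁅x, y⁆ = 0) :
    θ = 0 := by
  by_contra hne
  apply LieAlgebra.IsSimple.non_abelian K (L := G)
  exact ⟨fun x y => injective_of_ne_zero hθ hne ((h x y).trans (map_zero θ).symm)⟩

theorem comp_comm (hθ : θ ∈ centroid K G) (hθ' : θ' ∈ centroid K G) :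
    θ ∘ₗ θ' = θ' ∘ₗ θ :=
  sub_eq_zero.mp <| eq_zero_of_apply_lie_eq_zero (sub_mem (comp_mem hθ hθ') (comp_mem hθ' hθ))
    fun x y => sub_eq_zero.mpr (apply_apply_lie_comm hθ hθ' x y)

theorem evalₗ_injective {x : G} (hx : x ≠ 0) : Function.Injective (evalₗ (K := K) x) := by
  refine (injective_iff_map_eq_zero _).mpr fun θ hθx => ?_
  by_contra hne
  exact hx (injective_of_ne_zero θ.2 (fun h => hne (Subtype.ext h)) (hθx.trans (map_zero _).symm))

theorem finiteDimensional (hG : WeaklyNoetherian K G) : FiniteDimensional K (centroid K G) := by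
  have := LieAlgebra.IsSimple.nontrivial K G
  obtain ⟨x, hx⟩ := exists_ne (0 : G)
  have : FiniteDimensional K (LinearMap.range (evalₗ (K := K) x)) :=
    hG.finiteDimensional_of_isLieAbelian_s13 (orbit x)
  exact Module.Finite.of_injective (evalₗ x).rangeRestrict
    ((evalₗ x).injective_rangeRestrict_iff.mpr (evalₗ_injective hx))

end IsSimple

end centroid

theorem weaklyNoetherian_simple_centroid_is_finite_field_extension_general
    (K S : Type*) [Field K] [LieRing S] [LieAlgebra K S]
    [LieAlgebra.IsSimple K S]
    (hS : WeaklyNoetherian K S) :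
    FiniteDimensional K (centroid K S) ∧
    (∀ θ ∈ centroid K S, ∀ θ' ∈ centroid K S, θ ∘ₗ θ' = θ' ∘ₗ θ) ∧
    (∀ θ ∈ centroid K S, θ ≠ 0 → Function.Bijective θ) :=
  ⟨centroid.finiteDimensional hS, fun _ hθ _ hθ' => centroid.comp_comm hθ hθ',
    fun _ hθ hne => centroid.bijective_of_ne_zero hθ hne⟩

/-- The centroid of a weakly Noetherian simple Lie algebra is finite
dimensional, commutative under composition, and every nonzero element of it is bijective;
hence it is a finite field extension of `K`. -/
theorem weaklyNoetherian_simple_centroid_is_finite_field_extension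
    (K S : Type*) [Field K] [CharZero K] [LieRing S] [LieAlgebra K S]
    [LieAlgebra.IsSimple K S]
    (hS : WeaklyNoetherian K S) :
    FiniteDimensional K (centroid K S) ∧
    (∀ θ ∈ centroid K S, ∀ θ' ∈ centroid K S, θ ∘ₗ θ' = θ' ∘ₗ θ) ∧
    (∀ θ ∈ centroid K S, θ ≠ 0 → Function.Bijective θ) :=
  weaklyNoetherian_simple_centroid_is_finite_field_extension_general K S hS
end

section
/- Let K be a field of characteristic zero, let n ≥ 1, and let 𝓛 be a Lie algebra over K equipped with a ℤⁿ-grading: a family (𝓛_m)_{m∈ℤⁿ} of K-subspaces whose internal direct sum is 𝓛, satisfying [𝓛_a, 𝓛_b] ⊆ 𝓛_{a+b} for all a, b ∈ ℤⁿ, and with each homogeneous component 𝓛_m finite-dimensional over K. If 𝓛 is weakly Noetherian, then 𝓛 is strongly Noetherian: every Lie subalgebra b of 𝓛 is finitely generated, i.e. there is a finite subset of b generating b as a Lie algebra. -/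
open DirectSum
open scoped Pointwise

namespace DirectSum

section Projection

variable {ι R M : Type*} [DecidableEq ι] [Semiring R] [AddCommMonoid M] [Module R M]
  (𝓜 : ι → Submodule R M) [Decomposition 𝓜]

def gradedProj (i : ι) : M →ₗ[R] M :=
  (𝓜 i).subtype ∘ₗ DFinsupp.lapply i ∘ₗ (decomposeLinearEquiv 𝓜).toLinearMap

variable {𝓜}

@[simp]
lemma gradedProj_apply (i : ι) (x : M) : gradedProj 𝓜 i x = decompose 𝓜 x i := rfl

lemma gradedProj_mem (i : ι) (x : M) : gradedProj 𝓜 i x ∈ 𝓜 i := (decompose 𝓜 x i).2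

lemma gradedProj_of_mem {i : ι} {x : M} (hx : x ∈ 𝓜 i) : gradedProj 𝓜 i x = x :=
  decompose_of_mem_same 𝓜 hx

lemma gradedProj_of_mem_ne {i j : ι} {x : M} (hx : x ∈ 𝓜 i) (hij : i ≠ j) :
    gradedProj 𝓜 j x = 0 :=
  decompose_of_mem_ne 𝓜 hx hij

lemma finite_setOf_gradedProj_ne_zero (x : M) : {i | gradedProj 𝓜 i x ≠ 0}.Finite := by
  classical
  refine (decompose 𝓜 x).support.finite_toSet.subset fun i hi => ?_
  simpa [DFinsupp.mem_support_iff] using hi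

lemma mem_biSup_iff_gradedProj_eq_zero {S : Set ι} {x : M} :
    x ∈ ⨆ i ∈ S, 𝓜 i ↔ ∀ i ∉ S, gradedProj 𝓜 i x = 0 := by
  classical
  constructor
  · intro hx i hi
    suffices ⨆ j ∈ S, 𝓜 j ≤ LinearMap.ker (gradedProj 𝓜 i) from this hx
    exact iSup₂_le fun j hj y hy => gradedProj_of_mem_ne hy (ne_of_mem_of_not_mem hj hi)
  · intro h
    rw [← sum_support_decompose 𝓜 x]
    refine Submodule.sum_mem _ fun i hi => ?_
    have hiS : i ∈ S := by
      by_contra hiS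
      exact DFinsupp.mem_support_iff.mp hi (by simpa using h i hiS)
    exact Submodule.mem_iSup_of_mem i (Submodule.mem_iSup_of_mem hiS (decompose 𝓜 x i).2)

lemma biSup_inf_biSup_le (S T : Set ι) :
    (⨆ i ∈ S, 𝓜 i) ⊓ (⨆ i ∈ T, 𝓜 i) ≤ ⨆ i ∈ S ∩ T, 𝓜 i := by
  intro x hx
  obtain ⟨hS, hT⟩ := Submodule.mem_inf.mp hx
  rw [mem_biSup_iff_gradedProj_eq_zero] at hS hT ⊢
  intro i hi
  by_cases hiS : i ∈ S
  · exact hT i fun hiT => hi ⟨hiS, hiT⟩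
  · exact hS i hiS

lemma map_gradedProj_of_le {A : Submodule R M} {i : ι} (hA : A ≤ 𝓜 i) :
    A.map (gradedProj 𝓜 i) = A := by
  refine le_antisymm ?_ fun x hx => ⟨x, hx, gradedProj_of_mem (hA hx)⟩
  rintro _ ⟨x, hx, rfl⟩
  rwa [gradedProj_of_mem (hA hx)]

lemma map_gradedProj_eq_bot_of_le {A : Submodule R M} {i j : ι} (hA : A ≤ 𝓜 i) (hij : i ≠ j) :
    A.map (gradedProj 𝓜 j) = ⊥ := by
  refine eq_bot_iff.mpr ?_
  rintro _ ⟨x, hx, rfl⟩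
  exact (Submodule.mem_bot R).mpr (gradedProj_of_mem_ne (hA hx) hij)

end Projection

section Coarsening

variable {ι κ R M : Type*} [Ring R] [AddCommGroup M] [Module R M] (𝓜 : ι → Submodule R M)

def coarsening (f : ι → κ) (k : κ) : Submodule R M :=
  ⨆ i ∈ f ⁻¹' {k}, 𝓜 i

lemma biSup_coarsening (f : ι → κ) (T : Set κ) :
    ⨆ k ∈ T, coarsening 𝓜 f k = ⨆ i ∈ f ⁻¹' T, 𝓜 i := by
  refine le_antisymm (iSup₂_le fun k hk => iSup₂_le fun i hi => ?_) (iSup₂_le fun i hi => ?_)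
  · exact le_biSup 𝓜 (show f i ∈ T from (Set.mem_singleton_iff.mp hi).symm ▸ hk)
  · exact (le_biSup 𝓜 (Set.mem_singleton (f i))).trans (le_biSup (coarsening 𝓜 f) hi)

variable {𝓜} in
lemma IsInternal.coarsening [DecidableEq ι] [DecidableEq κ] (h : IsInternal 𝓜) (f : ι → κ) :
    IsInternal (DirectSum.coarsening 𝓜 f) := by
  refine isInternal_submodule_of_iSupIndep_of_iSup_eq_top (fun k => ?_) ?_
  · have hcompl : ⨆ (k' : κ) (_ : k' ≠ k), DirectSum.coarsening 𝓜 f k' =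
        ⨆ i ∈ f ⁻¹' {k}ᶜ, 𝓜 i :=
      biSup_coarsening 𝓜 f {k}ᶜ
    rw [hcompl]
    exact h.submodule_iSupIndep.disjoint_biSup_biSup (disjoint_compl_right.preimage f)
  · simpa [h.submodule_iSup_eq_top] using biSup_coarsening 𝓜 f Set.univ

end Coarsening

end DirectSum

section GradedBracket

variable {ι K L : Type*} [AddCommMonoid ι] [CommRing K] [LieRing L] [LieAlgebra K L]
  {𝓛 : ι → Submodule K L} [SetLike.GradedBracket 𝓛]

lemma lie_mem_biSup {S T U : Set ι} (hU : S + T ⊆ U) {x y : L} (hx : x ∈ ⨆ i ∈ S, 𝓛 i)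
    (hy : y ∈ ⨆ j ∈ T, 𝓛 j) : ⁅x, y⁆ ∈ ⨆ k ∈ U, 𝓛 k := by
  have hxy := Submodule.apply_mem_map₂ (LieModule.toEnd K L L : L →ₗ[K] L →ₗ[K] L) hx hy
  simp only [Submodule.map₂_iSup_left, Submodule.map₂_iSup_right] at hxy
  refine SetLike.le_def.mp (iSup₂_le fun j hj => iSup₂_le fun i hi => ?_) hxy
  refine Submodule.map₂_le.mpr fun u hu v hv => ?_
  refine Submodule.mem_iSup_of_mem (i + j) (Submodule.mem_iSup_of_mem (hU ⟨i, hi, j, hj, rfl⟩) ?_)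
  simpa using SetLike.GradedBracket.bracket_mem hu hv

end GradedBracket

noncomputable instance {ι κ K L : Type*} [DecidableEq ι] [AddCommMonoid ι] [DecidableEq κ]
    [AddCommMonoid κ] [CommRing K] [LieRing L] [LieAlgebra K L] (𝓛 : ι → Submodule K L)
    [GradedLieAlgebra 𝓛] (f : ι →+ κ) : GradedLieAlgebra (DirectSum.coarsening 𝓛 f) where
  bracket_mem {a b} _ _ hx hy := by
    refine lie_mem_biSup ?_ hx hy
    rintro _ ⟨i, hi, j, hj, rfl⟩
    simp_all [map_add]
  toDecomposition := ((Decomposition.isInternal 𝓛).coarsening f).chooseDecomposition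

lemma Submodule.exists_finite_span_sup_eq_top {R M : Type*} [Ring R] [AddCommGroup M] [Module R M]
    (N : Submodule R M) [Module.Finite R (M ⧸ N)] :
    ∃ s : Set M, s.Finite ∧ N ⊔ Submodule.span R s = ⊤ := by
  obtain ⟨n, s, hs⟩ := Module.Finite.exists_fin (R := R) (M := M ⧸ N)
  choose lift hlift using fun i => Submodule.Quotient.mk_surjective N (s i)
  refine ⟨Set.range lift, Set.finite_range lift, ?_⟩
  rw [← Submodule.map_mkQ_eq_top, Submodule.map_span, ← Set.range_comp]
  convert hs
  exact funext hlift

namespace LieSubalgebra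

variable {K L : Type*} [CommRing K] [LieRing L] [LieAlgebra K L]

def FG (b : LieSubalgebra K L) : Prop :=
  ∃ S : Set L, S.Finite ∧ lieSpan K L S = b

lemma fg_of_fg_toSubmodule {b : LieSubalgebra K L} (h : b.toSubmodule.FG) : b.FG := by
  obtain ⟨s, hs⟩ := h
  refine ⟨s, s.finite_toSet, le_antisymm (lieSpan_le.mpr fun x hx => ?_) fun x hx => ?_⟩
  · exact (hs ▸ Submodule.subset_span hx : x ∈ b.toSubmodule)
  · rw [← mem_toSubmodule, ← hs] at hx
    exact submodule_span_le_lieSpan hx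

lemma FG.of_le_lieSpan_sup {b c : LieSubalgebra K L} {X : Set L} (hX : X.Finite)
    (hXb : X ⊆ b) (hcb : c ≤ b) (hc : c.FG)
    (hb : b.toSubmodule ≤ (lieSpan K L X).toSubmodule ⊔ c.toSubmodule) : b.FG := by
  obtain ⟨Y, hY, rfl⟩ := hc
  refine ⟨X ∪ Y, hX.union hY, le_antisymm ?_ ?_⟩
  · exact lieSpan_le.mpr (Set.union_subset hXb (subset_lieSpan.trans hcb))
  · exact hb.trans (sup_le (lieSpan_mono Set.subset_union_left)
      (lieSpan_mono Set.subset_union_right))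

lemma map_derivedSeries_one_le_map₂ (m : LieSubalgebra K L) :
    (LieAlgebra.derivedSeries K m 1).toSubmodule.map m.toSubmodule.subtype ≤
      Submodule.map₂ (LieModule.toEnd K L L : L →ₗ[K] L →ₗ[K] L) m.toSubmodule m.toSubmodule := by
  rw [LieAlgebra.derivedSeries_def, LieAlgebra.derivedSeriesOfIdeal_succ,
    LieAlgebra.derivedSeriesOfIdeal_zero, LieSubmodule.lieIdeal_oper_eq_linear_span',
    Submodule.map_span, Submodule.span_le]
  rintro _ ⟨_, ⟨x, -, y, -, rfl⟩, rfl⟩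
  exact Submodule.apply_mem_map₂ _ x.2 y.2

end LieSubalgebra

namespace GradedLieAlgebra

section NonposSubalgebra

variable {ι K L : Type*} [AddCommMonoid ι] [CommRing K] [LieRing L] [LieAlgebra K L]

def nonposSubalgebra (𝓛 : ι → Submodule K L) [SetLike.GradedBracket 𝓛] (φ : ι →+ ℤ) :
    LieSubalgebra K L where
  toSubmodule := ⨆ i ∈ φ ⁻¹' Set.Iic 0, 𝓛 i
  lie_mem' hx hy := by
    refine lie_mem_biSup ?_ hx hy
    rintro _ ⟨i, hi, j, hj, rfl⟩
    simp_all [add_nonpos]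

end NonposSubalgebra

section IntGrading

variable {K L : Type*} [CommRing K] [LieRing L] [LieAlgebra K L]
  (𝓛 : ℤ → Submodule K L) [GradedLieAlgebra 𝓛]

local notation "bracketₗ" => (LieModule.toEnd K L L : L →ₗ[K] L →ₗ[K] L)

def leadingPart (b : LieSubalgebra K L) (d : ℤ) : Submodule K L :=
  (b.toSubmodule ⊓ ⨆ e ∈ Set.Iic d, 𝓛 e).map (gradedProj 𝓛 d)

variable {𝓛}

lemma leadingPart_le (b : LieSubalgebra K L) (d : ℤ) : leadingPart 𝓛 b d ≤ 𝓛 d := by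
  rintro _ ⟨x, -, rfl⟩
  exact gradedProj_mem d x

lemma sub_gradedProj_mem_biSup_Iio {x : L} {d : ℤ} (hx : x ∈ ⨆ e ∈ Set.Iic d, 𝓛 e) :
    x - gradedProj 𝓛 d x ∈ ⨆ e ∈ Set.Iio d, 𝓛 e := by
  rw [mem_biSup_iff_gradedProj_eq_zero] at hx ⊢
  intro i hi
  obtain rfl | hid := eq_or_ne d i
  · rw [map_sub, gradedProj_of_mem (gradedProj_mem _ x), sub_self]
  · rw [map_sub, hx i (by simp_all [lt_of_le_of_ne]), gradedProj_of_mem_ne (gradedProj_mem _ x) hid,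
      sub_self]

lemma gradedProj_lie_of_mem_biSup_Iic {x y : L} {d e : ℤ} (hx : x ∈ ⨆ i ∈ Set.Iic d, 𝓛 i)
    (hy : y ∈ ⨆ i ∈ Set.Iic e, 𝓛 i) :
    gradedProj 𝓛 (d + e) ⁅x, y⁆ = ⁅gradedProj 𝓛 d x, gradedProj 𝓛 e y⁆ := by
  set u := gradedProj 𝓛 d x
  set v := gradedProj 𝓛 e y
  have hu : u ∈ ⨆ i ∈ Set.Iic d, 𝓛 i := le_biSup 𝓛 Set.self_mem_Iic (gradedProj_mem d x)
  have hrest : ⁅x, y⁆ - ⁅u, v⁆ ∈ ⨆ i ∈ Set.Iio (d + e), 𝓛 i := by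
    have hsplit : ⁅x, y⁆ - ⁅u, v⁆ = ⁅x - u, y⁆ + ⁅u, y - v⁆ := by
      simp only [sub_lie, lie_sub]
      abel
    rw [hsplit]
    refine add_mem ?_ ?_
    · exact lie_mem_biSup (Set.Iio_add_Iic_subset d e) (sub_gradedProj_mem_biSup_Iio hx) hy
    · exact lie_mem_biSup (Set.Iic_add_Iio_subset d e) hu (sub_gradedProj_mem_biSup_Iio hy)
  have huv : ⁅u, v⁆ ∈ 𝓛 (d + e) :=
    SetLike.GradedBracket.bracket_mem (gradedProj_mem d x) (gradedProj_mem e y)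
  rw [← sub_add_cancel ⁅x, y⁆ ⁅u, v⁆, map_add, gradedProj_of_mem huv,
    (mem_biSup_iff_gradedProj_eq_zero.mp hrest) (d + e) Set.self_notMem_Iio, zero_add]

lemma map₂_leadingPart_le (b : LieSubalgebra K L) (d e : ℤ) :
    Submodule.map₂ bracketₗ
      (leadingPart 𝓛 b d) (leadingPart 𝓛 b e) ≤ leadingPart 𝓛 b (d + e) := by
  refine Submodule.map₂_le.mpr ?_
  rintro _ ⟨x, ⟨hxb, hx⟩, rfl⟩ _ ⟨y, ⟨hyb, hy⟩, rfl⟩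
  refine ⟨⁅x, y⁆, ⟨b.lie_mem hxb hyb, ?_⟩, ?_⟩
  · exact lie_mem_biSup (Set.Iic_add_Iic_subset d e) hx hy
  · simpa using gradedProj_lie_of_mem_biSup_Iic hx hy

variable (𝓛) in
def leadingSubalgebra (b : LieSubalgebra K L) : LieSubalgebra K L where
  toSubmodule := ⨆ d ∈ Set.Ioi 0, leadingPart 𝓛 b d
  lie_mem' {x y} hx hy := by
    have hxy := Submodule.apply_mem_map₂ bracketₗ hx hy
    simp only [Submodule.map₂_iSup_left, Submodule.map₂_iSup_right] at hxy
    refine SetLike.le_def.mp (iSup₂_le fun e he => iSup₂_le fun d hd => ?_) hxy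
    exact (map₂_leadingPart_le b d e).trans (le_biSup _ (Set.mem_Ioi.mpr (add_pos hd he)))

lemma gradedProj_mem_leadingPart {b : LieSubalgebra K L} {x : L}
    (hx : x ∈ leadingSubalgebra 𝓛 b) {d : ℤ} :
    gradedProj 𝓛 d x ∈ leadingPart 𝓛 b d := by
  have hmap := Submodule.mem_map_of_mem (f := gradedProj 𝓛 d) hx
  change _ ∈ (⨆ e ∈ Set.Ioi 0, leadingPart 𝓛 b e).map _ at hmap
  simp only [Submodule.map_iSup] at hmap
  refine SetLike.le_def.mp (iSup₂_le fun e _ => ?_) hmap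
  obtain rfl | hed := eq_or_ne e d
  · exact (map_gradedProj_of_le (leadingPart_le b e)).le
  · exact (map_gradedProj_eq_bot_of_le (leadingPart_le b e) hed).trans_le bot_le

lemma leadingPart_le_leadingPart_of_le_span_sup {b c : LieSubalgebra K L} {T : Set L}
    (hspan : (leadingSubalgebra 𝓛 b).toSubmodule ≤ Submodule.span K T ⊔
      Submodule.map₂ bracketₗ
        (leadingSubalgebra 𝓛 b).toSubmodule (leadingSubalgebra 𝓛 b).toSubmodule)
    (hT : ∀ t ∈ T, ∀ d, 0 < d → gradedProj 𝓛 d t ∈ leadingPart 𝓛 c d) :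
    ∀ d, 0 < d → leadingPart 𝓛 b d ≤ leadingPart 𝓛 c d := by
  refine Int.strongRec (m := 1) (fun d hd hpos => absurd hpos (by omega)) fun d _ ih hd => ?_
  have hgens : (Submodule.span K T).map (gradedProj 𝓛 d) ≤ leadingPart 𝓛 c d := by
    rw [Submodule.map_span, Submodule.span_le]
    rintro _ ⟨t, ht, rfl⟩
    exact hT t ht d hd
  have hbrackets : (Submodule.map₂ bracketₗ
      (leadingSubalgebra 𝓛 b).toSubmodule (leadingSubalgebra 𝓛 b).toSubmodule).map
        (gradedProj 𝓛 d) ≤ leadingPart 𝓛 c d := by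
    change (Submodule.map₂ _ (⨆ e ∈ Set.Ioi 0, leadingPart 𝓛 b e)
      (⨆ g ∈ Set.Ioi 0, leadingPart 𝓛 b g)).map _ ≤ _
    simp only [Submodule.map₂_iSup_left, Submodule.map₂_iSup_right, Submodule.map_iSup]
    refine iSup₂_le fun g hg => iSup₂_le fun e he => ?_
    have hdeg := (map₂_leadingPart_le (𝓛 := 𝓛) b e g).trans (leadingPart_le b (e + g))
    by_cases hegd : e + g = d
    · subst hegd
      rw [map_gradedProj_of_le hdeg]
      refine (Submodule.map₂_le_map₂ ?_ ?_).trans (map₂_leadingPart_le c e g)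
      · exact ih e (by simp_all) he
      · exact ih g (by simp_all) hg
    · rw [map_gradedProj_eq_bot_of_le hdeg hegd]
      exact bot_le
  intro u hu
  have huH : u ∈ leadingSubalgebra 𝓛 b :=
    Submodule.mem_iSup_of_mem d (Submodule.mem_iSup_of_mem (Set.mem_Ioi.mpr hd) hu)
  have hmap := Submodule.mem_map_of_mem (f := gradedProj 𝓛 d) (hspan huH)
  rw [Submodule.map_sup, gradedProj_of_mem (leadingPart_le b d hu)] at hmap
  exact sup_le hgens hbrackets hmap

lemma exists_mem_biSup_Iic (x : L) : ∃ N : ℕ, x ∈ ⨆ d ∈ Set.Iic (N : ℤ), 𝓛 d := by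
  obtain ⟨M, hM⟩ := (finite_setOf_gradedProj_ne_zero (𝓜 := 𝓛) x).bddAbove
  refine ⟨M.toNat, mem_biSup_iff_gradedProj_eq_zero.mpr fun i hi => ?_⟩
  by_contra h
  exact hi ((hM h).trans (Int.self_le_toNat M))

lemma le_sup_inf_biSup_Iic_zero_of_leadingPart_le {b c : LieSubalgebra K L} (hcb : c ≤ b)
    (h : ∀ d, 0 < d → leadingPart 𝓛 b d ≤ leadingPart 𝓛 c d) :
    b.toSubmodule ≤ c.toSubmodule ⊔ (b.toSubmodule ⊓ ⨆ d ∈ Set.Iic 0, 𝓛 d) := by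
  have hN : ∀ N : ℕ, b.toSubmodule ⊓ (⨆ d ∈ Set.Iic (N : ℤ), 𝓛 d) ≤
      c.toSubmodule ⊔ (b.toSubmodule ⊓ ⨆ d ∈ Set.Iic 0, 𝓛 d) := by
    intro N
    induction N with
    | zero => exact le_sup_right
    | succ N ih =>
      intro x hx
      obtain ⟨hxb, hx⟩ := Submodule.mem_inf.mp hx
      rw [Nat.cast_succ] at hx
      obtain ⟨y, ⟨hyc, hy⟩, hxy⟩ := h (N + 1) (by positivity) ⟨x, ⟨hxb, hx⟩, rfl⟩
      have hdiff : x - y ∈ ⨆ d ∈ Set.Iic (N : ℤ), 𝓛 d := by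
        have := sub_mem (sub_gradedProj_mem_biSup_Iio hx) (sub_gradedProj_mem_biSup_Iio hy)
        rw [hxy, sub_sub_sub_cancel_right] at this
        exact (biSup_mono fun _ => Int.lt_add_one_iff.mp : ⨆ d ∈ Set.Iio ((N : ℤ) + 1), 𝓛 d ≤ _)
          this
      rw [← add_sub_cancel y x]
      exact add_mem (Submodule.mem_sup_left hyc) (ih ⟨sub_mem hxb (hcb hyc), hdiff⟩)
  intro x hx
  obtain ⟨N, hxN⟩ := exists_mem_biSup_Iic (𝓛 := 𝓛) x
  exact hN N ⟨hx, hxN⟩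

end IntGrading

end GradedLieAlgebra

namespace WeaklyNoetherian

open GradedLieAlgebra

variable {K L : Type*} [Field K] [LieRing L] [LieAlgebra K L]

local notation "bracketₗ" => (LieModule.toEnd K L L : L →ₗ[K] L →ₗ[K] L)

theorem exists_finite_le_span_sup_map₂ (hWN : WeaklyNoetherian K L) (m : LieSubalgebra K L) :
    ∃ T : Set L, T.Finite ∧ T ⊆ m ∧
      m.toSubmodule ≤ Submodule.span K T ⊔ Submodule.map₂ bracketₗ m.toSubmodule m.toSubmodule := by
  have := hWN m
  obtain ⟨s, hs, htop⟩ :=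
    Submodule.exists_finite_span_sup_eq_top (LieAlgebra.derivedSeries K m 1).toSubmodule
  refine ⟨Subtype.val '' s, hs.image _, Set.image_subset_iff.mpr fun y _ => y.2, fun x hx => ?_⟩
  have hmem := Submodule.mem_map_of_mem (f := m.toSubmodule.subtype)
    (htop ▸ Submodule.mem_top : (⟨x, hx⟩ : m) ∈ _)
  rw [Submodule.map_sup, Submodule.map_span, sup_comm] at hmem
  exact sup_le_sup_left m.map_derivedSeries_one_le_map₂ _ hmem

theorem exists_finite_le_lieSpan_sup_inf_biSup_Iic_zero (hWN : WeaklyNoetherian K L)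
    (𝓛 : ℤ → Submodule K L) [GradedLieAlgebra 𝓛] (b : LieSubalgebra K L) :
    ∃ X : Set L, X.Finite ∧ X ⊆ b ∧ b.toSubmodule ≤
      (LieSubalgebra.lieSpan K L X).toSubmodule ⊔ (b.toSubmodule ⊓ ⨆ d ∈ Set.Iic 0, 𝓛 d) := by
  obtain ⟨T, hT, hTH, hspan⟩ := hWN.exists_finite_le_span_sup_map₂ (leadingSubalgebra 𝓛 b)
  have hlift (t : L) (ht : t ∈ T) (d : ℤ) (_ : 0 < d) :
      ∃ y ∈ b.toSubmodule ⊓ ⨆ e ∈ Set.Iic d, 𝓛 e, gradedProj 𝓛 d y = gradedProj 𝓛 d t :=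
    gradedProj_mem_leadingPart (hTH ht)
  choose! lift hlift_mem hlift_eq using hlift
  set X := ⋃ t ∈ T, lift t '' {d | 0 < d ∧ gradedProj 𝓛 d t ≠ 0}
  have hXb : X ⊆ b := Set.iUnion₂_subset fun t ht => Set.image_subset_iff.mpr fun d hd =>
    (Submodule.mem_inf.mp (hlift_mem t ht d hd.1)).1
  refine ⟨X, hT.biUnion fun t _ => ((finite_setOf_gradedProj_ne_zero t).subset
    fun _ hd => hd.2).image _, hXb, le_sup_inf_biSup_Iic_zero_of_leadingPart_le
    (LieSubalgebra.lieSpan_le.mpr hXb) (leadingPart_le_leadingPart_of_le_span_sup hspan ?_)⟩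
  intro t ht d hd
  by_cases h0 : gradedProj 𝓛 d t = 0
  · rw [h0]
    exact zero_mem _
  refine ⟨lift t d, ⟨LieSubalgebra.subset_lieSpan ?_, ?_⟩, hlift_eq t ht d hd⟩
  · exact Set.mem_biUnion ht ⟨d, ⟨hd, h0⟩, rfl⟩
  · exact (Submodule.mem_inf.mp (hlift_mem t ht d hd)).2

section IndexGrading

variable {ι : Type*} [DecidableEq ι] [AddCommMonoid ι]

theorem exists_finite_le_lieSpan_sup_inf_nonposSubalgebra (hWN : WeaklyNoetherian K L)
    (𝓛 : ι → Submodule K L) [GradedLieAlgebra 𝓛] (φ : ι →+ ℤ) (b : LieSubalgebra K L) :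
    ∃ X : Set L, X.Finite ∧ X ⊆ b ∧ b.toSubmodule ≤
      (LieSubalgebra.lieSpan K L X).toSubmodule ⊔ (b ⊓ nonposSubalgebra 𝓛 φ).toSubmodule := by
  have := hWN.exists_finite_le_lieSpan_sup_inf_biSup_Iic_zero (coarsening 𝓛 φ) b
  rwa [biSup_coarsening] at this

theorem exists_finite_le_lieSpan_sup_inf_nonposSubalgebra_inf_neg (hWN : WeaklyNoetherian K L)
    (𝓛 : ι → Submodule K L) [GradedLieAlgebra 𝓛] (φ : ι →+ ℤ) (b : LieSubalgebra K L) :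
    ∃ X : Set L, X.Finite ∧ X ⊆ b ∧ b.toSubmodule ≤ (LieSubalgebra.lieSpan K L X).toSubmodule ⊔
      (b ⊓ nonposSubalgebra 𝓛 φ ⊓ nonposSubalgebra 𝓛 (-φ)).toSubmodule := by
  obtain ⟨X₁, hX₁, hX₁b, hb⟩ := hWN.exists_finite_le_lieSpan_sup_inf_nonposSubalgebra 𝓛 φ b
  obtain ⟨X₂, hX₂, hX₂b, hb₀⟩ :=
    hWN.exists_finite_le_lieSpan_sup_inf_nonposSubalgebra 𝓛 (-φ) (b ⊓ nonposSubalgebra 𝓛 φ)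
  refine ⟨X₁ ∪ X₂, hX₁.union hX₂, Set.union_subset hX₁b fun x hx => (hX₂b hx).1, ?_⟩
  have hspan : (LieSubalgebra.lieSpan K L X₁).toSubmodule ⊔ (LieSubalgebra.lieSpan K L X₂) ≤
      (LieSubalgebra.lieSpan K L (X₁ ∪ X₂)).toSubmodule :=
    sup_le (LieSubalgebra.lieSpan_mono Set.subset_union_left)
      (LieSubalgebra.lieSpan_mono Set.subset_union_right)
  calc b.toSubmodule
      ≤ (LieSubalgebra.lieSpan K L X₁).toSubmodule ⊔ (b ⊓ nonposSubalgebra 𝓛 φ).toSubmodule := hb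
    _ ≤ (LieSubalgebra.lieSpan K L X₁).toSubmodule ⊔ ((LieSubalgebra.lieSpan K L X₂).toSubmodule ⊔
          (b ⊓ nonposSubalgebra 𝓛 φ ⊓ nonposSubalgebra 𝓛 (-φ)).toSubmodule) :=
        sup_le_sup_left hb₀ _
    _ ≤ _ := by
        rw [← sup_assoc]
        exact sup_le_sup_right hspan _

theorem fg_of_le_biSup_of_fg_inter_ker (hWN : WeaklyNoetherian K L) {𝓛 : ι → Submodule K L}
    [GradedLieAlgebra 𝓛] (φ : ι →+ ℤ) {S : Set ι}
    (hS : ∀ c : LieSubalgebra K L, c.toSubmodule ≤ ⨆ i ∈ S ∩ φ ⁻¹' {0}, 𝓛 i → c.FG)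
    {b : LieSubalgebra K L} (hb : b.toSubmodule ≤ ⨆ i ∈ S, 𝓛 i) : b.FG := by
  obtain ⟨X, hX, hXb, hle⟩ := hWN.exists_finite_le_lieSpan_sup_inf_nonposSubalgebra_inf_neg 𝓛 φ b
  refine LieSubalgebra.FG.of_le_lieSpan_sup hX hXb (inf_le_left.trans inf_le_left) (hS _ ?_) hle
  calc (b ⊓ nonposSubalgebra 𝓛 φ ⊓ nonposSubalgebra 𝓛 (-φ)).toSubmodule
      ≤ (⨆ i ∈ S, 𝓛 i) ⊓ (⨆ i ∈ φ ⁻¹' Set.Iic 0, 𝓛 i) ⊓ ⨆ i ∈ (-φ) ⁻¹' Set.Iic 0, 𝓛 i :=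
        inf_le_inf_right _ (inf_le_inf_right _ hb)
    _ ≤ ⨆ i ∈ S ∩ φ ⁻¹' Set.Iic 0 ∩ (-φ) ⁻¹' Set.Iic 0, 𝓛 i :=
        (inf_le_inf_right _ (biSup_inf_biSup_le _ _)).trans (biSup_inf_biSup_le _ _)
    _ ≤ _ := biSup_mono fun i ⟨⟨hiS, hφ⟩, hφ'⟩ => ⟨hiS, by simp_all; omega⟩

end IndexGrading

theorem fg_of_le_biSup_support_subset (hWN : WeaklyNoetherian K L) {σ : Type*} [Fintype σ]
    [DecidableEq σ] {𝓛 : (σ → ℤ) → Submodule K L} [GradedLieAlgebra 𝓛]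
    [FiniteDimensional K (𝓛 0)] (s : Finset σ) {b : LieSubalgebra K L}
    (hb : b.toSubmodule ≤ ⨆ m ∈ {m : σ → ℤ | Function.support m ⊆ s}, 𝓛 m) : b.FG := by
  induction s using Finset.induction_on generalizing b with
  | empty =>
    have hb0 : b.toSubmodule ≤ 𝓛 0 := hb.trans <| iSup₂_le fun m hm => by
      simp_all [Function.support_eq_empty_iff]
    exact LieSubalgebra.fg_of_fg_toSubmodule
      ((Submodule.fg_iff_finiteDimensional _).mpr (Submodule.finiteDimensional_of_le hb0))
  | insert i s _ ih =>
    refine hWN.fg_of_le_biSup_of_fg_inter_ker (Pi.evalAddMonoidHom (fun _ => ℤ) i)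
      (fun c hc => ih (hc.trans (biSup_mono ?_))) hb
    rintro m ⟨hm, hmi⟩ j hj
    obtain rfl | hjs := Finset.mem_insert.mp (hm hj)
    · exact absurd hmi hj
    · exact hjs

end WeaklyNoetherian

theorem weaklyNoetherian_graded_strongly_noetherian_general
    (K L : Type*) [Field K] [LieRing L] [LieAlgebra K L]
    (n : ℕ)
    (gr : (Fin n → ℤ) → Submodule K L)
    (hinternal : DirectSum.IsInternal gr)
    (hbracket : ∀ a b : Fin n → ℤ, ∀ x ∈ gr a, ∀ y ∈ gr b, ⁅x, y⁆ ∈ gr (a + b))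
    (hfd : ∀ a : Fin n → ℤ, FiniteDimensional K (gr a))
    (hWN : WeaklyNoetherian K L) :
    ∀ b : LieSubalgebra K L, ∃ S : Set L, S.Finite ∧ S ⊆ b ∧
      LieSubalgebra.lieSpan K L S = b := by
  let _ : GradedLieAlgebra gr :=
    { toDecomposition := hinternal.chooseDecomposition
      bracket_mem := @fun a b x y hx hy => hbracket a b x hx y hy }
  have := hfd 0
  intro b
  have hb : b.toSubmodule ≤
      ⨆ m ∈ {m : Fin n → ℤ | Function.support m ⊆ ↑(Finset.univ : Finset (Fin n))}, gr m := by
    simp only [Finset.coe_univ, Set.subset_univ, Set.ofPred_true, Set.mem_univ, iSup_pos,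
      hinternal.submodule_iSup_eq_top, le_top]
  obtain ⟨S, hS, rfl⟩ := hWN.fg_of_le_biSup_support_subset Finset.univ hb
  exact ⟨S, hS, LieSubalgebra.subset_lieSpan, rfl⟩

/-- A weakly Noetherian ℤⁿ-graded Lie algebra (grading an internal direct
sum of finite-dimensional homogeneous components, compatible with the bracket) is strongly
Noetherian: each of its Lie subalgebras is generated by a finite subset. -/
theorem weaklyNoetherian_graded_strongly_noetherian
    (K L : Type*) [Field K] [CharZero K] [LieRing L] [LieAlgebra K L]
    (n : ℕ) (hn : 1 ≤ n)
    (gr : (Fin n → ℤ) → Submodule K L)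
    (hinternal : DirectSum.IsInternal gr)
    (hbracket : ∀ a b : Fin n → ℤ, ∀ x ∈ gr a, ∀ y ∈ gr b, ⁅x, y⁆ ∈ gr (a + b))
    (hfd : ∀ a : Fin n → ℤ, FiniteDimensional K (gr a))
    (hWN : WeaklyNoetherian K L) :
    ∀ b : LieSubalgebra K L, ∃ S : Set L, S.Finite ∧ S ⊆ b ∧
      LieSubalgebra.lieSpan K L S = b :=
  weaklyNoetherian_graded_strongly_noetherian_general K L n gr hinternal hbracket hfd hWN
end
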